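/- arXiv:1701.05886 — 5 statements merged into one kernel-verified Lean document; each statement's English description precedes it below -/
import Mathlib

section
/- Every minimal total dominating set of a graph is an irreducible dominating set. -/
open SimpleGraph Finset

/-- Open neighborhood of a set: vertices having a neighbor in `S`. -/
def nbhd {V : Type*} (G : SimpleGraph V) (S : Set V) : Set V := {v | ∃ u ∈ S, G.Adj u v}

/-- Closed neighborhood of a vertex. -/
def closedNbhd {V : Type*} (G : SimpleGraph V) (v : V) : Set V := insert v (G.neighborSet v)

/-- `S` dominates vertex `v`. -/
def Dominates {V : Type*} (G : SimpleGraph V) (S : Set V) (v : V) : Prop :=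
  v ∈ S ∨ ∃ u ∈ S, G.Adj u v

/-- `D` is a dominating set of `G`. -/
def IsDomSet {V : Type*} (G : SimpleGraph V) (D : Set V) : Prop := ∀ v, Dominates G D v

/-- `D` is a minimal dominating set of `G`. -/
def IsMinDomSet {V : Type*} (G : SimpleGraph V) (D : Set V) : Prop :=
  IsDomSet G D ∧ ∀ D' ⊂ D, ¬ IsDomSet G D'

/-- `D` is an irreducible dominating set of `G`. -/
def IsIrredDomSet {V : Type*} (G : SimpleGraph V) (D : Set V) : Prop :=
  IsDomSet G D ∧ ¬ ∃ u ∈ D, IsDomSet G (D \ {u}) ∧ nbhd G D = nbhd G (D \ {u})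

/-- `D` is a total dominating set of `G`. -/
def IsTotDomSet {V : Type*} (G : SimpleGraph V) (D : Set V) : Prop :=
  ∀ v, ∃ u ∈ D, G.Adj u v

/-- `D` is a minimal total dominating set of `G`. -/
def IsMinTotDomSet {V : Type*} (G : SimpleGraph V) (D : Set V) : Prop :=
  IsTotDomSet G D ∧ ∀ D' ⊂ D, ¬ IsTotDomSet G D'

theorem stmt1 {V : Type*} (G : SimpleGraph V) (D : Set V)
    (hiso : ∀ v : V, ∃ u, G.Adj v u)
    (h : IsMinTotDomSet G D) : IsIrredDomSet G D := by
  obtain ⟨htot, hmin⟩ := h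
  refine ⟨fun v => Or.inr (htot v), ?_⟩
  rintro ⟨u, hu, hdom, hnb⟩
  apply hmin (D \ {u}) (Set.sdiff_singleton_ssubset.mpr hu)
  intro v
  have : v ∈ nbhd G (D \ {u}) := hnb ▸ (htot v)
  exact this
end

section
/- A dominating set D of a graph G is irreducible if and only if every vertex in D either has a D-private closed neighbor or is adjacent to a D-leaf. -/
open SimpleGraph Finset

/-- A `D`-leaf: a vertex of `D` with exactly one neighbor in `D`. -/
def IsDLeaf {V : Type*} (G : SimpleGraph V) (D : Set V) (v : V) : Prop :=
  v ∈ D ∧ ∃ u, G.neighborSet v ∩ D = {u}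

/-!
Removing `u` from `D` keeps `D \ {u}` dominating exactly when no vertex has `closedNbhd v ∩ D = {u}`,
and keeps the open neighbourhood of `D` exactly when no vertex has `G.neighborSet v ∩ D = {u}`.
A vertex of the second kind is either outside `D`, hence a `D`-private closed neighbour of `u`,
or inside `D`, hence a `D`-leaf adjacent to `u`.
-/

namespace Set

theorem nonempty_imp_sdiff_singleton_nonempty_iff {α : Type*} {s : Set α} {a : α} :
    (s.Nonempty → (s \ {a}).Nonempty) ↔ s ≠ {a} := by
  rw [Set.sdiff_nonempty]
  constructor
  · rintro h rfl
    exact h (singleton_nonempty a) le_rfl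
  · intro h hs hsub
    exact h (hs.subset_singleton_iff.1 hsub)

end Set

section

variable {V : Type*} {G : SimpleGraph V} {D S : Set V} {u v : V}

theorem dominates_iff_closedNbhd_inter_nonempty :
    Dominates G S v ↔ (closedNbhd G v ∩ S).Nonempty := by
  constructor
  · rintro (hv | ⟨u, hu, hadj⟩)
    · exact ⟨v, Set.mem_insert v _, hv⟩
    · exact ⟨u, Set.mem_insert_of_mem v hadj.symm, hu⟩
  · rintro ⟨w, rfl | hadj, hw⟩
    · exact Or.inl hw
    · exact Or.inr ⟨w, hw, hadj.symm⟩

theorem mem_nbhd_iff_neighborSet_inter_nonempty :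
    v ∈ nbhd G S ↔ (G.neighborSet v ∩ S).Nonempty :=
  ⟨fun ⟨u, hu, hadj⟩ => ⟨u, hadj.symm, hu⟩, fun ⟨u, hadj, hu⟩ => ⟨u, hu, hadj.symm⟩⟩

theorem isDomSet_sdiff_singleton_iff (hD : IsDomSet G D) :
    IsDomSet G (D \ {u}) ↔ ∀ v, closedNbhd G v ∩ D ≠ {u} := by
  refine forall_congr' fun v => ?_
  rw [← Set.nonempty_imp_sdiff_singleton_nonempty_iff, dominates_iff_closedNbhd_inter_nonempty,
    ← Set.inter_sdiff_assoc]
  exact ⟨fun h _ => h, fun h => h (dominates_iff_closedNbhd_inter_nonempty.1 (hD v))⟩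

theorem nbhd_eq_nbhd_sdiff_singleton_iff :
    nbhd G D = nbhd G (D \ {u}) ↔ ∀ v, G.neighborSet v ∩ D ≠ {u} := by
  have hmono : nbhd G (D \ {u}) ⊆ nbhd G D := fun v ⟨w, hw, hadj⟩ => ⟨w, hw.1, hadj⟩
  rw [Set.Subset.antisymm_iff, and_iff_left hmono]
  simp only [Set.subset_def, mem_nbhd_iff_neighborSet_inter_nonempty, ← Set.inter_sdiff_assoc,
    Set.nonempty_imp_sdiff_singleton_nonempty_iff]

theorem isDLeaf_and_adj_iff (hu : u ∈ D) :
    IsDLeaf G D v ∧ G.Adj u v ↔ v ∈ D ∧ G.neighborSet v ∩ D = {u} := by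
  constructor
  · rintro ⟨⟨hv, w, hw⟩, hadj⟩
    have hu' : u ∈ G.neighborSet v ∩ D := ⟨hadj.symm, hu⟩
    rw [hw] at hu' ⊢
    exact ⟨hv, congrArg _ hu'.symm⟩
  · rintro ⟨hv, hw⟩
    have hu' : u ∈ G.neighborSet v ∩ D := hw ▸ rfl
    exact ⟨⟨hv, u, hw⟩, hu'.1.symm⟩

theorem exists_closedNbhd_or_neighborSet_inter_eq_singleton_iff (hu : u ∈ D) :
    ((∃ v, closedNbhd G v ∩ D = {u}) ∨ ∃ v, G.neighborSet v ∩ D = {u}) ↔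
      (∃ v, closedNbhd G v ∩ D = {u}) ∨ ∃ v, IsDLeaf G D v ∧ G.Adj u v := by
  simp only [isDLeaf_and_adj_iff hu]
  constructor
  · rintro (hc | ⟨v, hv⟩)
    · exact Or.inl hc
    · by_cases hvD : v ∈ D
      · exact Or.inr ⟨v, hvD, hv⟩
      · exact Or.inl ⟨v, by rwa [closedNbhd, Set.insert_inter_of_notMem hvD]⟩
  · exact Or.imp_right fun ⟨v, _, hv⟩ => ⟨v, hv⟩

end

theorem stmt4 {V : Type*} (G : SimpleGraph V) (D : Set V)
    (hD : IsDomSet G D) :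
    IsIrredDomSet G D ↔
      ∀ u ∈ D, (∃ v, closedNbhd G v ∩ D = {u}) ∨ ∃ v, IsDLeaf G D v ∧ G.Adj u v := by
  simp only [IsIrredDomSet, hD, true_and, not_exists, not_and]
  refine forall₂_congr fun u hu => ?_
  rw [isDomSet_sdiff_singleton_iff hD, nbhd_eq_nbhd_sdiff_singleton_iff,
    ← exists_closedNbhd_or_neighborSet_inter_eq_singleton_iff hu]
  simp only [imp_iff_not_or, not_forall, ne_eq, not_not]
end

section
/- For every graph G without isolated vertices, γ(G[2K₁]) = γ_t(G), where 2K₁ is the edgeless graph on two vertices. -/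
open SimpleGraph Finset

/-- Lexicographic product of two simple graphs. -/
def lexProd {V W : Type*} (G : SimpleGraph V) (H : SimpleGraph W) : SimpleGraph (V × W) where
  Adj p q := G.Adj p.1 q.1 ∨ (p.1 = q.1 ∧ H.Adj p.2 q.2)
  symm := by
    constructor
    rintro p q (h | ⟨e, h⟩)
    · exact Or.inl h.symm
    · exact Or.inr ⟨e.symm, h.symm⟩
  loopless := by
    constructor
    rintro p (h | ⟨_, h⟩)
    · exact G.loopless.irrefl _ h
    · exact H.loopless.irrefl _ h

/-- Projection of `D ⊆ V(G) × V(H)` to `G`. -/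
def projG {V W : Type*} (D : Set (V × W)) : Set V := {x | ∃ y, (x, y) ∈ D}

/-- Fiber of `D ⊆ V(G) × V(H)` over `x ∈ V(G)`. -/
def projH {V W : Type*} (D : Set (V × W)) (x : V) : Set W := {y | (x, y) ∈ D}

/-- The domination number. -/
noncomputable def domNum {V : Type*} [Fintype V] (G : SimpleGraph V) : ℕ :=
  sInf {n | ∃ D : Finset V, IsDomSet G ↑D ∧ D.card = n}

/-- The total domination number. -/
noncomputable def totDomNum {V : Type*} [Fintype V] (G : SimpleGraph V) : ℕ :=
  sInf {n | ∃ D : Finset V, (∀ v, ∃ u ∈ D, G.Adj u v) ∧ D.card = n}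

/-! A total dominating set `T` of `G`, placed in one layer `V × {w}`, dominates `G[H]`: every
`(v, y)` has a `G`-neighbour `u ∈ T` and hence is adjacent to `(u, w)`. Conversely, let `D`
dominate `G[H]` with `H` edgeless on at least two vertices. If the fiber over `v` is not contained
in `D`, some point of it is dominated through `G`, so `v` has a `G`-neighbour among the projections
of `D`. If the whole fiber lies in `D`, it spends at least two elements of `D`, and one of them can
be traded for a `G`-neighbour of `v`. This yields a total dominating set of `G` with at most `|D|`
vertices. -/

def IsTotalDomSet {V : Type*} (G : SimpleGraph V) (D : Set V) : Prop := ∀ v, ∃ u ∈ D, G.Adj u v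

section Numbers

variable {V : Type*} [Fintype V] (G : SimpleGraph V)

theorem domNum_le_card {D : Finset V} (hD : IsDomSet G D) : domNum G ≤ D.card :=
  Nat.sInf_le (s := {n | ∃ D : Finset V, IsDomSet G D ∧ D.card = n}) ⟨D, hD, rfl⟩

theorem exists_isDomSet_card_eq_domNum : ∃ D : Finset V, IsDomSet G D ∧ D.card = domNum G :=
  Nat.sInf_mem (s := {n | ∃ D : Finset V, IsDomSet G D ∧ D.card = n})
    ⟨_, univ, fun v => Or.inl (by simp), rfl⟩

theorem totDomNum_le_card {D : Finset V} (hD : IsTotalDomSet G D) : totDomNum G ≤ D.card :=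
  Nat.sInf_le (s := {n | ∃ D : Finset V, IsTotalDomSet G D ∧ D.card = n}) ⟨D, hD, rfl⟩

theorem exists_isTotalDomSet_card_eq_totDomNum (hiso : ∀ v, ∃ u, G.Adj v u) :
    ∃ D : Finset V, IsTotalDomSet G D ∧ D.card = totDomNum G :=
  Nat.sInf_mem (s := {n | ∃ D : Finset V, IsTotalDomSet G D ∧ D.card = n})
    ⟨_, univ, fun v => (hiso v).imp fun u hu => ⟨mem_univ u, hu.symm⟩, rfl⟩

end Numbers

section LexProd

variable {V W : Type*} {G : SimpleGraph V}

theorem IsTotalDomSet.isDomSet_lexProd {T : Set V} (hT : IsTotalDomSet G T)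
    (H : SimpleGraph W) (w : W) : IsDomSet (lexProd G H) ((·, w) '' T) := by
  rintro ⟨v, y⟩
  obtain ⟨u, hu, huv⟩ := hT v
  exact Or.inr ⟨(u, w), Set.mem_image_of_mem _ hu, Or.inl huv⟩

theorem IsDomSet.fiber_subset_or_exists_adj {D : Set (V × W)}
    (hD : IsDomSet (lexProd G (⊥ : SimpleGraph W)) D) (v : V) :
    (∀ y, (v, y) ∈ D) ∨ ∃ p ∈ D, G.Adj p.1 v := by
  by_contra! h
  obtain ⟨⟨y, hy⟩, hadj⟩ := h
  rcases hD (v, y) with hmem | ⟨p, hp, hG | ⟨-, hbot⟩⟩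
  · exact hy hmem
  · exact hadj p hp hG
  · exact hbot

theorem IsDomSet.exists_isTotalDomSet_card_le [Nontrivial W] {D : Finset (V × W)}
    (hD : IsDomSet (lexProd G (⊥ : SimpleGraph W)) ↑D) (hiso : ∀ v, ∃ u, G.Adj v u) :
    ∃ T : Finset V, IsTotalDomSet G T ∧ T.card ≤ D.card := by
  classical
  choose f hf using hiso
  obtain ⟨w₀, w₁, hw⟩ := exists_pair_ne W
  -- A second element `(x, y)` of a fiber that already contains `(x, w₀)` is traded for `f x`.
  let φ : V × W → V := fun p => if p.2 ≠ w₀ ∧ (p.1, w₀) ∈ D then f p.1 else p.1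
  have fst_mem : ∀ p ∈ D, p.1 ∈ D.image φ := by
    rintro ⟨x, y⟩ hp
    by_cases hx : (x, w₀) ∈ D
    · exact mem_image.2 ⟨(x, w₀), hx, by simp [φ]⟩
    · exact mem_image.2 ⟨(x, y), hp, by simp [φ, hx]⟩
  refine ⟨D.image φ, fun v => ?_, card_image_le⟩
  rcases IsDomSet.fiber_subset_or_exists_adj hD v with hfib | ⟨p, hp, hadj⟩
  · have hφ : φ (v, w₁) = f v := by simp [φ, hw.symm, mem_coe.1 (hfib w₀)]
    exact ⟨f v, mem_image.2 ⟨(v, w₁), hfib w₁, hφ⟩, (hf v).symm⟩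
  · exact ⟨p.1, fst_mem p hp, hadj⟩

variable [Fintype V] [Fintype W]

theorem domNum_lexProd_le_totDomNum [Nonempty W] (H : SimpleGraph W)
    (hiso : ∀ v, ∃ u, G.Adj v u) : domNum (lexProd G H) ≤ totDomNum G := by
  classical
  obtain ⟨T, hT, hcard⟩ := exists_isTotalDomSet_card_eq_totDomNum G hiso
  let w : W := Classical.arbitrary W
  calc domNum (lexProd G H) ≤ (T.image (·, w)).card :=
        domNum_le_card _ (by simpa only [coe_image] using hT.isDomSet_lexProd H w)
    _ ≤ T.card := card_image_le
    _ = totDomNum G := hcard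

theorem totDomNum_le_domNum_lexProd_bot [Nontrivial W] (hiso : ∀ v, ∃ u, G.Adj v u) :
    totDomNum G ≤ domNum (lexProd G (⊥ : SimpleGraph W)) := by
  obtain ⟨D, hD, hcard⟩ := exists_isDomSet_card_eq_domNum (lexProd G (⊥ : SimpleGraph W))
  obtain ⟨T, hT, hTD⟩ := IsDomSet.exists_isTotalDomSet_card_le hD hiso
  exact (totDomNum_le_card G hT).trans (hTD.trans_eq hcard)

end LexProd

theorem stmt11 {V : Type*} [Fintype V] (G : SimpleGraph V)
    (hiso : ∀ v : V, ∃ u, G.Adj v u) :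
    domNum (lexProd G (⊥ : SimpleGraph (Fin 2))) = totDomNum G :=
  le_antisymm (domNum_lexProd_le_totDomNum ⊥ hiso) (totDomNum_le_domNum_lexProd_bot hiso)
end

section
/- For any two graphs G and H with γ(H) ≥ 2, a set D ⊆ V(G) × V(H) is a minimal dominating set of G[H] if and only if: (i) p_G(D) is an irreducible dominating set of G; and (ii) for every x ∈ p_G(D), if x is totally dominated by p_G(D) then |p_{H,x}(D)| = 1, and if x is barely dominated by p_G(D) then p_{H,x}(D) is a minimal dominating set of H. -/
open SimpleGraph Finset

/-!
A set `D` dominates `G[H]` exactly when every `x ∈ V(G)` is either totally dominated by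
`p_G(D)` or has a fibre `p_{H,x}(D)` dominating `H`; since `γ(H) ≥ 2`, such a fibre has at
least two points.

For a minimal `D`, each condition is obtained by replacing a single fibre and invoking
minimality: emptying the fibre over `u` shows that `p_G(D)` is irreducible, shrinking the
fibre over a totally dominated vertex to one point shows that it is a singleton, and
shrinking the fibre over a barely dominated vertex to a smaller dominating set of `H` shows
that it is minimal.

Conversely, let `D' ⊂ D` dominate `G[H]`. A vertex totally dominated by `p_G(D)` but not by
`p_G(D')` would need a fibre of `D'` with two points inside a singleton fibre of `D`; hence
`p_G(D)` and `p_G(D')` have the same open neighbourhood, and irreducibility forces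
`p_G(D') = p_G(D)`. A point of `D \ D'` then lies over a vertex whose fibre contradicts the
conditions on `D`.
-/

section Domination

variable {V : Type*} {G : SimpleGraph V} {S T : Set V}

lemma nbhd_mono (h : S ⊆ T) : nbhd G S ⊆ nbhd G T :=
  fun _ ⟨u, hu, hadj⟩ => ⟨u, h hu, hadj⟩

lemma IsDomSet.mono (hS : IsDomSet G S) (h : S ⊆ T) : IsDomSet G T :=
  fun v => (hS v).imp (@h v) fun hv => nbhd_mono h hv

lemma IsDomSet.mem_nbhd_of_notMem (hS : IsDomSet G S) {v : V} (hv : v ∉ S) : v ∈ nbhd G S :=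
  (hS v).resolve_left hv

lemma IsDomSet.nonempty [Nonempty V] (hS : IsDomSet G S) : S.Nonempty := by
  obtain ⟨v⟩ := ‹Nonempty V›
  rcases hS v with hv | ⟨u, hu, -⟩
  exacts [⟨v, hv⟩, ⟨u, hu⟩]

lemma isDomSet_univ : IsDomSet G Set.univ :=
  fun _ => Or.inl trivial

lemma closedNbhd_inter_eq_singleton_iff {x : V} :
    closedNbhd G x ∩ S = {x} ↔ x ∈ S ∧ x ∉ nbhd G S := by
  constructor
  · intro h
    have hx : x ∈ closedNbhd G x ∩ S := by rw [h]; rfl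
    refine ⟨hx.2, fun ⟨u, hu, hux⟩ => G.ne_of_adj hux ?_⟩
    have hu' : u ∈ closedNbhd G x ∩ S := ⟨Or.inr hux.symm, hu⟩
    rwa [h] at hu'
  · rintro ⟨hx, hxN⟩
    ext u
    constructor
    · rintro ⟨rfl | hxu, hu⟩
      · rfl
      · exact (hxN ⟨u, hu, hxu.symm⟩).elim
    · rintro rfl
      exact ⟨Set.mem_insert _ _, hx⟩

end Domination

lemma IsDomSet.nontrivial_of_two_le_domNum {W : Type*} [Fintype W] {H : SimpleGraph W}
    (hH : 2 ≤ domNum H) {S : Set W} (hS : IsDomSet H S) : S.Nontrivial := by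
  by_contra h
  have hsub := Set.not_nontrivial_iff.mp h
  obtain ⟨s, rfl⟩ := hsub.finite.exists_finset_coe
  have hcard : s.card ≤ 1 := Finset.card_le_one.mpr fun a ha b hb => hsub ha hb
  have : domNum H ≤ s.card := Nat.sInf_le ⟨s, hS, rfl⟩
  omega

lemma nonempty_of_two_le_domNum {W : Type*} [Fintype W] {H : SimpleGraph W}
    (hH : 2 ≤ domNum H) : Nonempty W :=
  ⟨(isDomSet_univ.nontrivial_of_two_le_domNum hH).nonempty.some⟩

section LexProd

variable {V W : Type*} {G : SimpleGraph V} {H : SimpleGraph W} {D D' : Set (V × W)}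
  {x : V} {E : Set W}

lemma mem_projG_iff : x ∈ projG D ↔ (projH D x).Nonempty :=
  Iff.rfl

lemma projG_mono (h : D' ⊆ D) : projG D' ⊆ projG D :=
  fun _ ⟨y, hy⟩ => ⟨y, h hy⟩

lemma projH_mono (h : D' ⊆ D) (x : V) : projH D' x ⊆ projH D x :=
  fun _ hy => h hy

lemma isDomSet_lexProd_iff :
    IsDomSet (lexProd G H) D ↔ ∀ x, x ∈ nbhd G (projG D) ∨ IsDomSet H (projH D x) := by
  constructor
  · intro hD x
    by_cases hx : x ∈ nbhd G (projG D)
    · exact Or.inl hx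
    · refine Or.inr fun y => ?_
      rcases hD (x, y) with hxy | ⟨⟨a, b⟩, hab, hG | ⟨rfl, hH⟩⟩
      · exact Or.inl hxy
      · exact absurd ⟨a, ⟨b, hab⟩, hG⟩ hx
      · exact Or.inr ⟨b, hab, hH⟩
  · rintro h ⟨x, y⟩
    rcases h x with ⟨u, ⟨v, huv⟩, hux⟩ | hfib
    · exact Or.inr ⟨(u, v), huv, Or.inl hux⟩
    · rcases hfib y with hy | ⟨v, hv, hvy⟩
      · exact Or.inl hy
      · exact Or.inr ⟨(x, v), hv, Or.inr ⟨rfl, hvy⟩⟩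

lemma IsDomSet.projG_of_lexProd [Nonempty W] (hD : IsDomSet (lexProd G H) D) :
    IsDomSet G (projG D) :=
  fun x => (isDomSet_lexProd_iff.mp hD x).symm.imp IsDomSet.nonempty id

def updateFiber (D : Set (V × W)) (x : V) (E : Set W) : Set (V × W) :=
  {p ∈ D | p.1 ≠ x} ∪ {x} ×ˢ E

lemma projH_updateFiber_self : projH (updateFiber D x E) x = E := by
  ext
  simp [projH, updateFiber]

lemma projH_updateFiber_of_ne {a : V} (h : a ≠ x) :
    projH (updateFiber D x E) a = projH D a := by
  ext
  simp [projH, updateFiber, h]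

lemma projG_updateFiber_of_nonempty (hx : x ∈ projG D) (hE : E.Nonempty) :
    projG (updateFiber D x E) = projG D := by
  ext a
  rw [mem_projG_iff, mem_projG_iff]
  by_cases ha : a = x
  · subst ha
    rw [projH_updateFiber_self]
    exact ⟨fun _ => hx, fun _ => hE⟩
  · rw [projH_updateFiber_of_ne ha]

lemma projG_updateFiber_empty : projG (updateFiber D x ∅) = projG D \ {x} := by
  ext a
  simp [projG, updateFiber]

lemma updateFiber_ssubset (hE : E ⊂ projH D x) : updateFiber D x E ⊂ D := by
  refine ⟨?_, fun h => ?_⟩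
  · rintro ⟨a, b⟩ (⟨hab, -⟩ | ⟨rfl, hb⟩)
    exacts [hab, hE.subset hb]
  · obtain ⟨y, hy, hyE⟩ := Set.exists_of_ssubset hE
    have hy' := projH_mono h x hy
    rw [projH_updateFiber_self] at hy'
    exact hyE hy'

lemma isDomSet_updateFiber (hD : IsDomSet (lexProd G H) D)
    (hN : nbhd G (projG D) ⊆ nbhd G (projG (updateFiber D x E)))
    (hx : x ∈ nbhd G (projG D) ∨ IsDomSet H E) :
    IsDomSet (lexProd G H) (updateFiber D x E) := by
  refine isDomSet_lexProd_iff.mpr fun a => ?_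
  by_cases ha : a = x
  · subst ha
    rw [projH_updateFiber_self]
    exact hx.imp_left (@hN a)
  · rw [projH_updateFiber_of_ne ha]
    exact (isDomSet_lexProd_iff.mp hD a).imp_left (@hN a)

section Minimal

variable (hD : IsMinDomSet (lexProd G H) D)
include hD

lemma IsMinDomSet.not_isDomSet_updateFiber (hE : E ⊂ projH D x)
    (hN : nbhd G (projG D) ⊆ nbhd G (projG (updateFiber D x E))) :
    ¬ (x ∈ nbhd G (projG D) ∨ IsDomSet H E) :=
  fun hx => hD.2 _ (updateFiber_ssubset hE) (isDomSet_updateFiber hD.1 hN hx)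

lemma IsMinDomSet.isIrredDomSet_projG [Nonempty W] : IsIrredDomSet G (projG D) := by
  refine ⟨hD.1.projG_of_lexProd, fun ⟨u, hu, hdom, hN⟩ => ?_⟩
  refine hD.not_isDomSet_updateFiber (Set.empty_ssubset.mpr hu)
    (by rw [projG_updateFiber_empty]; exact hN.subset) (Or.inl ?_)
  rw [hN]
  exact hdom.mem_nbhd_of_notMem fun h => h.2 rfl

lemma IsMinDomSet.projH_eq_singleton (hx : x ∈ projG D) (hxN : x ∈ nbhd G (projG D)) :
    ∃ y, projH D x = {y} := by
  obtain ⟨y, hy⟩ := mem_projG_iff.mp hx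
  refine ⟨y, by_contra fun hne => ?_⟩
  have hE : {y} ⊂ projH D x := (Set.singleton_subset_iff.mpr hy).ssubset_of_ne (Ne.symm hne)
  refine hD.not_isDomSet_updateFiber hE ?_ (Or.inl hxN)
  rw [projG_updateFiber_of_nonempty hx (Set.singleton_nonempty y)]

lemma IsMinDomSet.isMinDomSet_projH [Nonempty W] (hx : x ∈ projG D)
    (hxN : x ∉ nbhd G (projG D)) : IsMinDomSet H (projH D x) := by
  refine ⟨(isDomSet_lexProd_iff.mp hD.1 x).resolve_left hxN, fun E hE hEdom => ?_⟩
  refine hD.not_isDomSet_updateFiber hE ?_ (Or.inr hEdom)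
  rw [projG_updateFiber_of_nonempty hx hEdom.nonempty]

end Minimal

section Converse

variable [Fintype W] (hH : 2 ≤ domNum H)
  (hsing : ∀ x ∈ projG D, x ∈ nbhd G (projG D) → ∃ y, projH D x = {y})
include hH hsing

lemma nbhd_projG_subset_of_isDomSet (hD' : IsDomSet (lexProd G H) D') (hsub : D' ⊆ D) :
    nbhd G (projG D) ⊆ nbhd G (projG D') := by
  intro z hz
  by_contra hz'
  have hnt := ((isDomSet_lexProd_iff.mp hD' z).resolve_left hz').nontrivial_of_two_le_domNum hH
  obtain ⟨y, hy⟩ := hsing z (projG_mono hsub hnt.nonempty) hz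
  exact hnt.not_subset_singleton (hy ▸ projH_mono hsub z)

lemma projG_eq_of_isIrredDomSet (hirr : IsIrredDomSet G (projG D))
    (hD' : IsDomSet (lexProd G H) D') (hsub : D' ⊆ D) : projG D' = projG D := by
  have := nonempty_of_two_le_domNum hH
  refine (projG_mono hsub).antisymm fun u hu => by_contra fun hu' => hirr.2 ⟨u, hu, ?_⟩
  have hsub' : projG D' ⊆ projG D \ {u} :=
    fun a ha => ⟨projG_mono hsub ha, fun h => hu' (h ▸ ha)⟩
  exact ⟨hD'.projG_of_lexProd.mono hsub',
    ((nbhd_projG_subset_of_isDomSet hH hsing hD' hsub).trans (nbhd_mono hsub')).antisymm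
      (nbhd_mono Set.sdiff_subset)⟩

lemma isMinDomSet_lexProd_of_isIrredDomSet (hirr : IsIrredDomSet G (projG D))
    (hmin : ∀ x ∈ projG D, x ∉ nbhd G (projG D) → IsMinDomSet H (projH D x)) :
    IsMinDomSet (lexProd G H) D := by
  refine ⟨isDomSet_lexProd_iff.mpr fun x => ?_, fun D' hD'D hD' => ?_⟩
  · by_cases hx : x ∈ nbhd G (projG D)
    · exact Or.inl hx
    · exact Or.inr (hmin x ((hirr.1 x).resolve_right hx) hx).1
  obtain ⟨⟨x, y⟩, hyD, hyD'⟩ := Set.exists_of_ssubset hD'D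
  have hproj := projG_eq_of_isIrredDomSet hH hsing hirr hD' hD'D.subset
  by_cases hx : x ∈ nbhd G (projG D)
  · obtain ⟨y', hy'⟩ := hsing x ⟨y, hyD⟩ hx
    have hxD' : x ∈ projG D' := hproj ▸ ⟨y, hyD⟩
    have hfib : projH D' x = projH D x :=
      hy' ▸ (mem_projG_iff.mp hxD').subset_singleton_iff.mp (hy' ▸ projH_mono hD'D.subset x)
    exact hyD' (hfib ▸ hyD : y ∈ projH D' x)
  · have hx' : x ∉ nbhd G (projG D') := hproj ▸ hx
    exact (hmin x ⟨y, hyD⟩ hx).2 _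
      ((Set.ssubset_iff_of_subset (projH_mono hD'D.subset x)).mpr ⟨y, hyD, hyD'⟩)
      ((isDomSet_lexProd_iff.mp hD' x).resolve_left hx')

end Converse

end LexProd

theorem stmt13 {V W : Type*} [Fintype W]
    (G : SimpleGraph V) (H : SimpleGraph W)
    (hH : 2 ≤ domNum H) (D : Set (V × W)) :
    IsMinDomSet (lexProd G H) D ↔
      IsIrredDomSet G (projG D) ∧
        ∀ x ∈ projG D,
          ((∃ u ∈ projG D, G.Adj u x) → ∃ y, projH D x = {y}) ∧
          (closedNbhd G x ∩ projG D = {x} → IsMinDomSet H (projH D x)) := by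
  have := nonempty_of_two_le_domNum hH
  constructor
  · intro hD
    refine ⟨hD.isIrredDomSet_projG, fun x hx => ⟨hD.projH_eq_singleton hx, fun hbare => ?_⟩⟩
    obtain ⟨hx, hxN⟩ := closedNbhd_inter_eq_singleton_iff.mp hbare
    exact hD.isMinDomSet_projH hx hxN
  · rintro ⟨hirr, hfib⟩
    exact isMinDomSet_lexProd_of_isIrredDomSet hH (fun x hx => (hfib x hx).1) hirr
      fun x hx hxN => (hfib x hx).2 (closedNbhd_inter_eq_singleton_iff.mpr ⟨hx, hxN⟩)
end

section
/- If G is a connected well-dominated graph and H is a nontrivial complete graph, then the lexicographic product G[H] is well-dominated. -/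
open SimpleGraph Finset

/-- A graph is well-dominated if all its minimal dominating sets have the same size. -/
def WellDominated (V : Type*) [Fintype V] (G : SimpleGraph V) : Prop :=
  ∀ D₁ D₂ : Finset V, IsMinDomSet G ↑D₁ → IsMinDomSet G ↑D₂ → D₁.card = D₂.card

/-!
Since `H` is complete, a vertex `(x, y)` of `G[H]` is dominated by `D` exactly when `x` is
dominated in `G` by the projection of `D`. Hence a minimal dominating set of `G[H]` meets each
fibre in at most one vertex (otherwise one of the two could be dropped), and its projection is a
minimal dominating set of `G` of the same size (a smaller dominating subset would lift back to a
proper dominating subset of `D`). Well-domination of `G` then transfers to `G[H]`.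
-/

section LexProdTop

variable {V W : Type*} (G : SimpleGraph V)

lemma isDomSet_lexProd_top_iff [Nonempty W] (D : Set (V × W)) :
    IsDomSet (lexProd G (⊤ : SimpleGraph W)) D ↔ IsDomSet G (projG D) := by
  constructor
  · intro h x
    obtain ⟨y⟩ := ‹Nonempty W›
    rcases h (x, y) with hxy | ⟨⟨x', y'⟩, hx'y', hG | ⟨rfl, -⟩⟩
    · exact Or.inl ⟨y, hxy⟩
    · exact Or.inr ⟨x', ⟨y', hx'y'⟩, hG⟩
    · exact Or.inl ⟨y', hx'y'⟩
  · rintro h ⟨x, y⟩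
    rcases h x with ⟨y', hxy'⟩ | ⟨x', ⟨y', hx'y'⟩, hG⟩
    · by_cases hy : y' = y
      · exact Or.inl (hy ▸ hxy')
      · exact Or.inr ⟨(x, y'), hxy', Or.inr ⟨rfl, hy⟩⟩
    · exact Or.inr ⟨(x', y'), hx'y', Or.inl hG⟩

variable {G} [Nonempty W] {D : Set (V × W)}

lemma IsMinDomSet.injOn_fst_of_lexProd_top
    (hD : IsMinDomSet (lexProd G (⊤ : SimpleGraph W)) D) : D.InjOn Prod.fst := by
  rintro ⟨x, y₁⟩ h₁ ⟨x', y₂⟩ h₂ (rfl : x = x')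
  by_contra hne
  have hproj : projG (D \ {(x, y₁)}) = projG D := by
    refine Set.Subset.antisymm (fun x' ⟨y, hy⟩ => ⟨y, hy.1⟩) fun x' ⟨y, hy⟩ => ?_
    by_cases hp : (x', y) = (x, y₁)
    · obtain ⟨rfl, rfl⟩ := Prod.ext_iff.mp hp
      exact ⟨y₂, h₂, fun h => hne (congrArg (x', ·) (Prod.ext_iff.mp h).2.symm)⟩
    · exact ⟨y, hy, hp⟩
  refine hD.2 _ (Set.sdiff_singleton_ssubset.2 h₁) ?_
  rw [isDomSet_lexProd_top_iff, hproj, ← isDomSet_lexProd_top_iff]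
  exact hD.1

lemma IsMinDomSet.projG_of_lexProd_top
    (hD : IsMinDomSet (lexProd G (⊤ : SimpleGraph W)) D) : IsMinDomSet G (projG D) := by
  refine ⟨(isDomSet_lexProd_top_iff G D).1 hD.1, fun S hS hSdom => ?_⟩
  obtain ⟨x, ⟨y, hxy⟩, hxS⟩ := Set.exists_of_ssubset hS
  have hlift : projG {p ∈ D | p.1 ∈ S} = S :=
    Set.Subset.antisymm (fun _ ⟨_, hp⟩ => hp.2) fun x' hx' =>
      let ⟨y', hy'⟩ := hS.1 hx'
      ⟨y', hy', hx'⟩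
  refine hD.2 {p ∈ D | p.1 ∈ S} ⟨Set.sep_subset _ _, fun h => hxS (h hxy).2⟩ ?_
  rwa [isDomSet_lexProd_top_iff, hlift]

end LexProdTop

lemma coe_image_fst_eq_projG {V W : Type*} [DecidableEq V] (D : Finset (V × W)) :
    (↑(D.image Prod.fst) : Set V) = projG (↑D : Set (V × W)) := by
  ext x
  simp [projG]

theorem stmt15_general {V W : Type*} [Fintype V] [Fintype W]
    (G : SimpleGraph V) (H : SimpleGraph W)
    (hGwd : WellDominated V G) (hHcomplete : H = ⊤) :
    WellDominated (V × W) (lexProd G H) := by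
  classical
  subst hHcomplete
  rcases isEmpty_or_nonempty W with _ | _
  · intro D₁ D₂ _ _
    rw [Subsingleton.elim D₁ D₂]
  intro D₁ D₂ h₁ h₂
  rw [← card_image_of_injOn h₁.injOn_fst_of_lexProd_top,
    ← card_image_of_injOn h₂.injOn_fst_of_lexProd_top]
  apply hGwd <;> rw [coe_image_fst_eq_projG]
  exacts [h₁.projG_of_lexProd_top, h₂.projG_of_lexProd_top]

theorem stmt15 {V W : Type*} [Fintype V] [Fintype W]
    (G : SimpleGraph V) (H : SimpleGraph W)
    (hGconn : G.Connected) (hGwd : WellDominated V G)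
    (hWcard : 2 ≤ Fintype.card W) (hHcomplete : H = ⊤) :
    WellDominated (V × W) (lexProd G H) :=
  stmt15_general G H hGwd hHcomplete
end
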